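/- Under the hypotheses of the equal-hidden-width feed-forward bound — f(x) = W_n σ(··· σ(W_1 x) ···) with hidden widths m_1 = ··· = m_{n−1} = m ≥ 3, M = max{m_0, m, m_n}, σ_i = ‖W_i‖ > 0, activation σ L-Lipschitz with σ(0) = 0, and quantized matrices Q_j satisfying ‖W_j − Q_j‖ ≤ 2√2 δ M² N^{−1/m} for all j — assume additionally that N ≥ (2√2 δ M² / min{σ_1, ..., σ_n})^m. Then for every input X ∈ ℝ^{m_0}, ‖f(X) − f_Q(X)‖ ≤ √2 δ M² N^{−1/m} L^{n−1} ‖X‖ · (∏_{i=1}^{n} σ_i) · Σ_{j=1}^{n} 2^j / σ_j. -/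

import Mathlib

open scoped RealInnerProductSpace BigOperators

/-- The matrix 2-norm (operator norm w.r.t. Euclidean norms), i.e. the largest
singular value. -/
noncomputable def opNorm {m n : ℕ} (A : Matrix (Fin m) (Fin n) ℝ) : ℝ :=
  ‖LinearMap.toContinuousLinearMap (Matrix.toEuclideanLin A)‖

/-- The `j`-th column of a matrix, viewed as a vector of `ℝ^m` with the Euclidean norm. -/
noncomputable def matCol {m n : ℕ} (A : Matrix (Fin m) (Fin n) ℝ) (j : Fin n) :
    EuclideanSpace ℝ (Fin m) :=
  WithLp.toLp 2 (fun i => A i j)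

/-- Frame variation `σ(F,p)` of the ordered family `v = e ∘ p`:
`∑_{i=1}^{N-1} ‖v i - v (i+1)‖`. -/
noncomputable def frameVar {E : Type*} [NormedAddCommGroup E] :
    {N : ℕ} → (Fin N → E) → ℝ
  | 0, _ => 0
  | n + 1, v => ∑ i : Fin n, ‖v i.castSucc - v i.succ‖

/-- The midrise quantization alphabet `A^δ_K`. -/
def midrise (δ : ℝ) (K : ℕ) : Set ℝ :=
  {a | ∃ j : Fin (2 * K), a = (-(K : ℝ) + 1 / 2 + (j : ℕ)) * δ}

/-- Componentwise application of a scalar function to a Euclidean vector. -/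
noncomputable def cwMap (σ : ℝ → ℝ) {d : ℕ} (v : EuclideanSpace ℝ (Fin d)) :
    EuclideanSpace ℝ (Fin d) :=
  WithLp.toLp 2 (fun j => σ (v j))

/-- `layerSeq σ m W X i` is the activated output after `i` layers:
`z_0 = X`, `z_{i+1} = σ.(W_i z_i)`. -/
noncomputable def layerSeq (σ : ℝ → ℝ) (m : ℕ → ℕ)
    (W : (i : ℕ) → Matrix (Fin (m (i + 1))) (Fin (m i)) ℝ)
    (X : EuclideanSpace ℝ (Fin (m 0))) : (i : ℕ) → EuclideanSpace ℝ (Fin (m i))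
  | 0 => X
  | i + 1 => cwMap σ (Matrix.toEuclideanLin (W i) (layerSeq σ m W X i))

/-- The `n`-layer feed-forward network `W_n σ(W_{n-1} σ(⋯ σ(W_1 X)⋯))`
(no activation after the last layer, no biases). -/
noncomputable def net (σ : ℝ → ℝ) (m : ℕ → ℕ)
    (W : (i : ℕ) → Matrix (Fin (m (i + 1))) (Fin (m i)) ℝ)
    (n : ℕ) (X : EuclideanSpace ℝ (Fin (m 0))) : EuclideanSpace ℝ (Fin (m n)) :=
  match n with
  | 0 => X
  | k + 1 => Matrix.toEuclideanLin (W k) (layerSeq σ m W X k)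

/-- Componentwise ReLU. -/
noncomputable def relu {d : ℕ} (v : EuclideanSpace ℝ (Fin d)) : EuclideanSpace ℝ (Fin d) :=
  cwMap (fun t => max 0 t) v

/-- A residual block `z(x) = W₂ σ(W₁ x) + x` with ReLU activation `σ`. -/
noncomputable def resBlock {k : ℕ} (W1 W2 : Matrix (Fin k) (Fin k) ℝ)
    (x : EuclideanSpace ℝ (Fin k)) : EuclideanSpace ℝ (Fin k) :=
  Matrix.toEuclideanLin W2 (relu (Matrix.toEuclideanLin W1 x)) + x

/-- Partial compositions of a residual network:
`y_0 = X`, `y_i = z^{[i]} ∘ σ ∘ ⋯ ∘ σ ∘ z^{[1]} (X)`, where block `i` (1-based)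
uses matrices `W1 (i-1)`, `W2 (i-1)`. -/
noncomputable def resPartial {k : ℕ} (W1 W2 : ℕ → Matrix (Fin k) (Fin k) ℝ)
    (X : EuclideanSpace ℝ (Fin k)) : ℕ → EuclideanSpace ℝ (Fin k)
  | 0 => X
  | 1 => resBlock (W1 0) (W2 0) X
  | i + 2 => resBlock (W1 (i + 1)) (W2 (i + 1)) (relu (resPartial W1 W2 X (i + 1)))


lemma opNorm_nonneg {p q : ℕ} (A : Matrix (Fin p) (Fin q) ℝ) : 0 ≤ opNorm A :=
  norm_nonneg _

lemma apply_le_opNorm {p q : ℕ} (A : Matrix (Fin p) (Fin q) ℝ)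
    (v : EuclideanSpace ℝ (Fin q)) :
    ‖Matrix.toEuclideanLin A v‖ ≤ opNorm A * ‖v‖ :=
  (LinearMap.toContinuousLinearMap (Matrix.toEuclideanLin A)).le_opNorm v

lemma opNorm_tri {p q : ℕ} (A B : Matrix (Fin p) (Fin q) ℝ) :
    opNorm A ≤ opNorm (A - B) + opNorm B := by
  unfold opNorm
  have h : A = (A - B) + B := by simp
  calc ‖LinearMap.toContinuousLinearMap (Matrix.toEuclideanLin A)‖
      = ‖LinearMap.toContinuousLinearMap (Matrix.toEuclideanLin (A - B))
          + LinearMap.toContinuousLinearMap (Matrix.toEuclideanLin B)‖ := by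
        rw [← map_add, ← map_add, ← h]
    _ ≤ _ := norm_add_le _ _

lemma cw_lip {σ : ℝ → ℝ} {L : ℝ} (hσ : ∀ a b : ℝ, |σ a - σ b| ≤ L * |a - b|)
    {d : ℕ} (u v : EuclideanSpace ℝ (Fin d)) :
    ‖cwMap σ u - cwMap σ v‖ ≤ L * ‖u - v‖ := by
  have hL : 0 ≤ L := le_trans (abs_nonneg _) (by simpa using hσ 1 0)
  rw [EuclideanSpace.norm_eq, EuclideanSpace.norm_eq]
  rw [show L = Real.sqrt (L ^ 2) from (Real.sqrt_sq hL).symm]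
  rw [← Real.sqrt_mul (by positivity)]
  apply Real.sqrt_le_sqrt
  rw [Finset.mul_sum]
  apply Finset.sum_le_sum
  intro i _
  have h1 : (cwMap σ u - cwMap σ v) i = σ (u i) - σ (v i) := rfl
  have h2 : (u - v) i = u i - v i := rfl
  rw [h1, h2]
  have := hσ (u i) (v i)
  have h3 : ‖σ (u i) - σ (v i)‖ ≤ L * ‖u i - v i‖ := by
    simpa [Real.norm_eq_abs] using this
  calc ‖σ (u i) - σ (v i)‖ ^ 2 ≤ (L * ‖u i - v i‖) ^ 2 := by
        apply pow_le_pow_left₀ (norm_nonneg _) h3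
    _ = L ^ 2 * ‖u i - v i‖ ^ 2 := by ring

lemma cw_norm {σ : ℝ → ℝ} {L : ℝ} (hσ : ∀ a b : ℝ, |σ a - σ b| ≤ L * |a - b|)
    (hσ0 : σ 0 = 0) {d : ℕ} (u : EuclideanSpace ℝ (Fin d)) : ‖cwMap σ u‖ ≤ L * ‖u‖ := by
  have h := cw_lip hσ u 0
  have h0 : cwMap σ (0 : EuclideanSpace ℝ (Fin d)) = 0 := by
    ext j
    simpa [cwMap] using hσ0
  simpa [h0] using h


lemma opNorm_sub_comm {p q : ℕ} (A B : Matrix (Fin p) (Fin q) ℝ) :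
    opNorm (A - B) = opNorm (B - A) := by
  unfold opNorm
  have h : A - B = -(B - A) := by simp
  rw [h, map_neg, map_neg, norm_neg]


/-- (Corollary 5.5: equal hidden widths and `N` large. The
network has `n+1` layers indexed `0, …, n`; the paper's `σ_j` is `opNorm (W (j-1))`,
its `2^j/σ_j` sum `∑_{j=1}^{n}` becomes `∑_{j=0}^{n} 2^{j+1}/opNorm (W j)`, and
`L^{n-1}` is `L^n`.) -/
theorem stmt9 (L : ℝ) (σ : ℝ → ℝ)
    (hσ : ∀ a b : ℝ, |σ a - σ b| ≤ L * |a - b|) (hσ0 : σ 0 = 0)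
    (n : ℕ) (md : ℕ → ℕ) (mh : ℕ)
    (hmh : 3 ≤ mh) (h0 : 3 ≤ md 0) (hlast : 3 ≤ md (n + 1))
    (hhid : ∀ i, 1 ≤ i → i ≤ n → md i = mh)
    (W Q : (i : ℕ) → Matrix (Fin (md (i + 1))) (Fin (md i)) ℝ)
    (hpos : ∀ j ≤ n, 0 < opNorm (W j))
    (δ : ℝ) (hδ : 0 < δ) (N : ℕ) (hN : 0 < N)
    (M : ℕ) (hM : M = max (md 0) (max mh (md (n + 1))))
    (hQ : ∀ j ≤ n, opNorm (W j - Q j) ≤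
      2 * Real.sqrt 2 * δ * (M : ℝ) ^ 2 * (N : ℝ) ^ (-(1 / (mh : ℝ))))
    (hNbig : ((2 * Real.sqrt 2 * δ * (M : ℝ) ^ 2) /
        (Finset.inf' (Finset.range (n + 1)) (Finset.nonempty_range_iff.mpr (Nat.succ_ne_zero n))
          (fun i => opNorm (W i)))) ^ mh ≤ (N : ℝ))
    (X : EuclideanSpace ℝ (Fin (md 0))) :
    ‖net σ md W (n + 1) X - net σ md Q (n + 1) X‖ ≤
      Real.sqrt 2 * δ * (M : ℝ) ^ 2 * (N : ℝ) ^ (-(1 / (mh : ℝ))) * L ^ n * ‖X‖ *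
        (∏ i ∈ Finset.range (n + 1), opNorm (W i)) *
        ∑ j ∈ Finset.range (n + 1), 2 ^ (j + 1) / opNorm (W j) := by
  have hL : 0 ≤ L := le_trans (abs_nonneg _) (by simpa using hσ 1 0)
  have hN' : (0 : ℝ) < (N : ℝ) := by exact_mod_cast hN
  have hM3 : 3 ≤ M := hM ▸ le_trans h0 (le_max_left _ _)
  have hMr : (0 : ℝ) < (M : ℝ) := by exact_mod_cast (by omega : 0 < M)
  have hs2 : (0 : ℝ) < Real.sqrt 2 := Real.sqrt_pos.mpr (by norm_num)
  have hmh0 : (mh : ℝ) ≠ 0 := Nat.cast_ne_zero.mpr (by omega)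
  set ε := 2 * Real.sqrt 2 * δ * (M : ℝ) ^ 2 * (N : ℝ) ^ (-(1 / (mh : ℝ))) with hεdef
  have hNe : (0 : ℝ) < (N : ℝ) ^ (-(1 / (mh : ℝ))) := Real.rpow_pos_of_pos hN' _
  have hc : (0 : ℝ) < 2 * Real.sqrt 2 * δ * (M : ℝ) ^ 2 :=
    mul_pos (mul_pos (mul_pos (by norm_num) hs2) hδ) (pow_pos hMr 2)
  have hε0 : 0 < ε := mul_pos hc hNe
  set s := Finset.inf' (Finset.range (n + 1))
      (Finset.nonempty_range_iff.mpr (Nat.succ_ne_zero n)) (fun i => opNorm (W i)) with hsdef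
  have hspos : 0 < s := by
    rw [hsdef, Finset.lt_inf'_iff]
    intro b hb
    exact hpos b (by simpa [Nat.lt_succ_iff] using Finset.mem_range.mp hb)
  have hNp : 0 < (N : ℝ) ^ ((1 : ℝ) / (mh : ℝ)) := Real.rpow_pos_of_pos hN' _
  have hbase : 0 < (2 * Real.sqrt 2 * δ * (M : ℝ) ^ 2) / s := div_pos hc hspos
  have hr1 : (2 * Real.sqrt 2 * δ * (M : ℝ) ^ 2) / s ≤ (N : ℝ) ^ ((1 : ℝ) / (mh : ℝ)) := by
    have h := Real.rpow_le_rpow (le_of_lt (pow_pos hbase mh)) hNbig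
      (by positivity : (0 : ℝ) ≤ 1 / (mh : ℝ))
    rwa [← Real.rpow_natCast ((2 * Real.sqrt 2 * δ * (M : ℝ) ^ 2) / s) mh,
      ← Real.rpow_mul hbase.le, mul_one_div, div_self hmh0, Real.rpow_one] at h
  have hεle : ∀ j, j ≤ n → ε ≤ opNorm (W j) := by
    intro j hj
    have h2 : 2 * Real.sqrt 2 * δ * (M : ℝ) ^ 2 ≤ s * (N : ℝ) ^ ((1 : ℝ) / (mh : ℝ)) := by
      rw [div_le_iff₀ hspos] at hr1
      nlinarith [hr1]
    have hεs : ε ≤ s := by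
      have he : ε = (2 * Real.sqrt 2 * δ * (M : ℝ) ^ 2) / (N : ℝ) ^ ((1 : ℝ) / (mh : ℝ)) := by
        rw [hεdef, Real.rpow_neg hN'.le]
        ring
      rw [he, div_le_iff₀ hNp]
      nlinarith [h2]
    exact le_trans hεs (hsdef ▸ Finset.inf'_le _ (Finset.mem_range.mpr (by omega)))
  have hQle : ∀ j, j ≤ n → opNorm (Q j) ≤ 2 * opNorm (W j) := by
    intro j hj
    calc opNorm (Q j) ≤ opNorm (Q j - W j) + opNorm (W j) := opNorm_tri _ _
      _ = opNorm (W j - Q j) + opNorm (W j) := by rw [opNorm_sub_comm]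
      _ ≤ ε + opNorm (W j) := by linarith [hQ j hj]
      _ ≤ 2 * opNorm (W j) := by linarith [hεle j hj]
  -- main induction
  have key : ∀ i, i ≤ n →
      ‖layerSeq σ md Q X i‖ ≤ L ^ i * (∏ k ∈ Finset.range i, (2 * opNorm (W k))) * ‖X‖ ∧
      ‖layerSeq σ md W X i - layerSeq σ md Q X i‖ ≤
        L ^ i * ε * ‖X‖ * (∏ k ∈ Finset.range i, opNorm (W k)) *
          (∑ j ∈ Finset.range i, (2 : ℝ) ^ j / opNorm (W j)) := by
    intro i hi
    induction i with
    | zero => constructor <;> simp [layerSeq]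
    | succ i ih =>
      have hi' : i ≤ n := Nat.le_of_succ_le hi
      obtain ⟨hy, hd⟩ := ih hi'
      have hσi : 0 < opNorm (W i) := hpos i hi'
      have hQB := hQle i hi'
      have hWQ := hQ i hi'
      set z := layerSeq σ md W X i with hz
      set y := layerSeq σ md Q X i with hyd
      have hyn : (0 : ℝ) ≤ ‖y‖ := norm_nonneg _
      have hprodn : (0 : ℝ) ≤ ∏ k ∈ Finset.range i, (2 * opNorm (W k)) :=
        Finset.prod_nonneg fun k _ => by linarith [opNorm_nonneg (W k)]
      have hPn : (0 : ℝ) ≤ ∏ k ∈ Finset.range i, opNorm (W k) :=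
        Finset.prod_nonneg fun k _ => opNorm_nonneg (W k)
      have hSn : (0 : ℝ) ≤ ∑ j ∈ Finset.range i, (2 : ℝ) ^ j / opNorm (W j) :=
        Finset.sum_nonneg fun j _ => div_nonneg (by positivity) (opNorm_nonneg (W j))
      constructor
      · calc ‖layerSeq σ md Q X (i + 1)‖
            ≤ L * ‖Matrix.toEuclideanLin (Q i) y‖ := cw_norm hσ hσ0 _
          _ ≤ L * (opNorm (Q i) * ‖y‖) :=
              mul_le_mul_of_nonneg_left (apply_le_opNorm _ _) hL
          _ ≤ L * ((2 * opNorm (W i)) *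
                (L ^ i * (∏ k ∈ Finset.range i, (2 * opNorm (W k))) * ‖X‖)) := by
              apply mul_le_mul_of_nonneg_left _ hL
              exact mul_le_mul hQB hy hyn (by linarith)
          _ = L ^ (i + 1) * (∏ k ∈ Finset.range (i + 1), (2 * opNorm (W k))) * ‖X‖ := by
              rw [Finset.prod_range_succ]; ring
      · have hdecomp : Matrix.toEuclideanLin (W i) z - Matrix.toEuclideanLin (Q i) y
            = Matrix.toEuclideanLin (W i) (z - y) + Matrix.toEuclideanLin (W i - Q i) y := by
          rw [map_sub Matrix.toEuclideanLin (W i) (Q i)]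
          simp [map_sub]
        calc ‖layerSeq σ md W X (i + 1) - layerSeq σ md Q X (i + 1)‖
            ≤ L * ‖Matrix.toEuclideanLin (W i) z - Matrix.toEuclideanLin (Q i) y‖ :=
              cw_lip hσ _ _
          _ ≤ L * (opNorm (W i) * ‖z - y‖ + ε * ‖y‖) := by
              apply mul_le_mul_of_nonneg_left _ hL
              rw [hdecomp]
              calc ‖Matrix.toEuclideanLin (W i) (z - y) + Matrix.toEuclideanLin (W i - Q i) y‖
                  ≤ ‖Matrix.toEuclideanLin (W i) (z - y)‖ +
                    ‖Matrix.toEuclideanLin (W i - Q i) y‖ := norm_add_le _ _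
                _ ≤ opNorm (W i) * ‖z - y‖ + ε * ‖y‖ := by
                    apply add_le_add (apply_le_opNorm _ _)
                    exact le_trans (apply_le_opNorm _ _)
                      (mul_le_mul_of_nonneg_right hWQ hyn)
          _ ≤ L * (opNorm (W i) *
                (L ^ i * ε * ‖X‖ * (∏ k ∈ Finset.range i, opNorm (W k)) *
                  (∑ j ∈ Finset.range i, (2 : ℝ) ^ j / opNorm (W j)))
              + ε * (L ^ i * (∏ k ∈ Finset.range i, (2 * opNorm (W k))) * ‖X‖)) := by
              apply mul_le_mul_of_nonneg_left _ hL
              exact add_le_add (mul_le_mul_of_nonneg_left hd hσi.le)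
                (mul_le_mul_of_nonneg_left hy hε0.le)
          _ = L ^ (i + 1) * ε * ‖X‖ * (∏ k ∈ Finset.range (i + 1), opNorm (W k)) *
                (∑ j ∈ Finset.range (i + 1), (2 : ℝ) ^ j / opNorm (W j)) := by
              rw [Finset.prod_range_succ, Finset.sum_range_succ,
                show (∏ k ∈ Finset.range i, (2 * opNorm (W k)))
                  = 2 ^ i * ∏ k ∈ Finset.range i, opNorm (W k) by
                    rw [Finset.prod_mul_distrib, Finset.prod_const, Finset.card_range]]
              field_simp
              ring
  obtain ⟨hy, hd⟩ := key n le_rfl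
  set z := layerSeq σ md W X n with hz
  set y := layerSeq σ md Q X n with hyd
  have hσn : 0 < opNorm (W n) := hpos n le_rfl
  have hWQ := hQ n le_rfl
  have hyn : (0 : ℝ) ≤ ‖y‖ := norm_nonneg _
  have e1 : net σ md W (n + 1) X - net σ md Q (n + 1) X
      = Matrix.toEuclideanLin (W n) z - Matrix.toEuclideanLin (Q n) y := rfl
  have hdecomp : Matrix.toEuclideanLin (W n) z - Matrix.toEuclideanLin (Q n) y
      = Matrix.toEuclideanLin (W n) (z - y) + Matrix.toEuclideanLin (W n - Q n) y := by
    rw [map_sub Matrix.toEuclideanLin (W n) (Q n)]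
    simp [map_sub]
  have hsum2 : (∑ j ∈ Finset.range (n + 1), (2 : ℝ) ^ (j + 1) / opNorm (W j))
      = 2 * ∑ j ∈ Finset.range (n + 1), (2 : ℝ) ^ j / opNorm (W j) := by
    rw [Finset.mul_sum]
    exact Finset.sum_congr rfl fun j _ => by rw [pow_succ]; ring
  calc ‖net σ md W (n + 1) X - net σ md Q (n + 1) X‖
      = ‖Matrix.toEuclideanLin (W n) (z - y) + Matrix.toEuclideanLin (W n - Q n) y‖ := by
        rw [e1, hdecomp]
    _ ≤ ‖Matrix.toEuclideanLin (W n) (z - y)‖ + ‖Matrix.toEuclideanLin (W n - Q n) y‖ :=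
        norm_add_le _ _
    _ ≤ opNorm (W n) * ‖z - y‖ + ε * ‖y‖ := by
        apply add_le_add (apply_le_opNorm _ _)
        exact le_trans (apply_le_opNorm _ _) (mul_le_mul_of_nonneg_right hWQ hyn)
    _ ≤ opNorm (W n) *
          (L ^ n * ε * ‖X‖ * (∏ k ∈ Finset.range n, opNorm (W k)) *
            (∑ j ∈ Finset.range n, (2 : ℝ) ^ j / opNorm (W j)))
        + ε * (L ^ n * (∏ k ∈ Finset.range n, (2 * opNorm (W k))) * ‖X‖) :=
        add_le_add (mul_le_mul_of_nonneg_left hd hσn.le)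
          (mul_le_mul_of_nonneg_left hy hε0.le)
    _ = Real.sqrt 2 * δ * (M : ℝ) ^ 2 * (N : ℝ) ^ (-(1 / (mh : ℝ))) * L ^ n * ‖X‖ *
          (∏ i ∈ Finset.range (n + 1), opNorm (W i)) *
          ∑ j ∈ Finset.range (n + 1), 2 ^ (j + 1) / opNorm (W j) := by
        rw [hsum2, hεdef, Finset.prod_range_succ, Finset.sum_range_succ,
          show (∏ k ∈ Finset.range n, (2 * opNorm (W k)))
            = 2 ^ n * ∏ k ∈ Finset.range n, opNorm (W k) by
              rw [Finset.prod_mul_distrib, Finset.prod_const, Finset.card_range]]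
        field_simp
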